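/- arXiv:0906.2995 — 2 statements merged into one kernel-verified Lean document; each statement's English description precedes it below -/
import Mathlib

section
/- The space Γ^∞ with the alphabetic topology is Hausdorff. -/
namespace InfWords

variable {Γ : Type}

/-- Finite and infinite words over `Γ`: `Γ^∞ = Γ* ∪ Γ^ω`. -/
abbrev Word (Γ : Type) := List Γ ⊕ (ℕ → Γ)

/-- Prepend a finite word to a finite or infinite word. -/
def wappend (u : List Γ) : Word Γ → Word Γ
  | Sum.inl v => Sum.inl (u ++ v)
  | Sum.inr f => Sum.inr fun n => if h : n < u.length then u.get ⟨n, h⟩ else f (n - u.length)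

/-- The set of finite words `Γ*` inside `Γ^∞`. -/
def finWords (Γ : Type) : Set (Word Γ) := Set.range Sum.inl

/-- The set of infinite words `Γ^ω` inside `Γ^∞`. -/
def infWords (Γ : Type) : Set (Word Γ) := Set.range Sum.inr

/-- The alphabet of a word: the letters occurring in it. -/
def alph : Word Γ → Set Γ
  | Sum.inl u => {a | a ∈ u}
  | Sum.inr f => {a | ∃ n, f n = a}

/-- The imaginary part: letters occurring infinitely often. -/
def im : Word Γ → Set Γ
  | Sum.inl _ => ∅
  | Sum.inr f => {a | ∀ n, ∃ m, n ≤ m ∧ f m = a}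

/-- `A^∞`: words all of whose letters lie in `A`. -/
def infin (A : Set Γ) : Set (Word Γ) := {α | alph α ⊆ A}

/-- The basic set `u A^∞` of the alphabetic topology. -/
def cone (u : List Γ) (A : Set Γ) : Set (Word Γ) := wappend u '' infin A

/-- The alphabetic topology on `Γ^∞`, generated by the sets `u A^∞`. -/
instance alphTop : TopologicalSpace (Word Γ) :=
  TopologicalSpace.generateFrom {S | ∃ u A, S = cone u A}

/-- `cpx A`: words with `alph = im = A`. -/
def cpx (A : Set Γ) : Set (Word Γ) := {β | alph β = A ∧ im β = A}

/-- The strict alphabetic topology, generated by the sets `u · cpx A`. -/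
def strictTopo (Γ : Type) : TopologicalSpace (Word Γ) :=
  TopologicalSpace.generateFrom {S | ∃ u A, S = wappend u '' cpx A}

/-- `u` is a finite prefix of the word `α`. -/
def IsPre (u : List Γ) : Word Γ → Prop
  | Sum.inl v => u <+: v
  | Sum.inr f => ∀ i : Fin u.length, u.get i = f i.1

/-- The arrow language `→W`: every prefix extends to a prefix lying in `W`. -/
def arrow (W : Set (List Γ)) : Set (Word Γ) :=
  {α | ∀ u, IsPre u α → ∃ v, IsPre (u ++ v) α ∧ u ++ v ∈ W}

/-- The right quotient `L / A^∞`. -/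
def quotInf (L : Set (Word Γ)) (A : Set Γ) : Set (List Γ) :=
  {u | ∃ β ∈ infin A, wappend u β ∈ L}

/-- `A^im`: words whose set of letters occurring infinitely often is exactly `A`. -/
def imSet (A : Set Γ) : Set (Word Γ) := {α | im α = A}

/-- `z^ω`, with the convention `1^ω = 1`. -/
def omegaPow : List Γ → Word Γ
  | [] => Sum.inl []
  | a :: l => Sum.inr fun n => (a :: l).get ⟨n % (a :: l).length, Nat.mod_lt n (Nat.succ_pos _)⟩

/-- The partial products `u v₀ v₁ ⋯ v_{n-1}`. -/
def partialProd (u : List Γ) (v : ℕ → List Γ) (n : ℕ) : List Γ :=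
  u ++ ((List.range n).map v).flatten

/-- `α` is the (finite or infinite) product `u v₀ v₁ v₂ ⋯`, with convention `1^ω = 1`. -/
def IsInfProd (u : List Γ) (v : ℕ → List Γ) : Word Γ → Prop
  | Sum.inl w => (∀ n, partialProd u v n <+: w) ∧ ∃ n, partialProd u v n = w
  | Sum.inr f => (∀ n, IsPre (partialProd u v n) (Sum.inr f)) ∧
      ∀ k, ∃ n, k < (partialProd u v n).length

/-- `h : Γ* → M` is a monoid homomorphism. -/
structure IsHom {M : Type} [Monoid M] (h : List Γ → M) : Prop where
  map_one : h [] = 1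
  map_mul : ∀ u v, h (u ++ v) = h u * h v

/-- `[s][e]^ω`: products `u v₀ v₁ ⋯` with `h u = s` and `h vᵢ = e`. -/
def pairSet {M : Type} (h : List Γ → M) (s e : M) : Set (Word Γ) :=
  {α | ∃ u v, h u = s ∧ (∀ i, h (v i) = e) ∧ IsInfProd u v α}

/-- `(s, e)` is a linked pair. -/
def LinkedPair {M : Type} [Monoid M] (s e : M) : Prop := s * e = s ∧ e * e = e

/-- `h` strongly recognizes `L`. -/
def StronglyRecognizes {M : Type} [Monoid M] (h : List Γ → M) (L : Set (Word Γ)) : Prop :=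
  L = ⋃ (s : M) (e : M) (_ : LinkedPair s e ∧ (pairSet h s e ∩ L).Nonempty), pairSet h s e

/-- `L` is regular: strongly recognized by a surjective homomorphism onto a finite monoid. -/
def Regular (L : Set (Word Γ)) : Prop :=
  ∃ (M : Type) (i : Monoid M), Finite M ∧
    ∃ h : List Γ → M, @IsHom Γ M i h ∧ Function.Surjective h ∧ @StronglyRecognizes Γ M i h L

/-- `L` is deterministic. -/
def Deterministic (L : Set (Word Γ)) : Prop :=
  Regular L ∧ ∃ W : Set (List Γ), L ∩ infWords Γ = arrow W ∩ infWords Γ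

/-- The syntactic preorder `u ≤_L v`. -/
def synLe (L : Set (Word Γ)) (u v : List Γ) : Prop :=
  ∀ x y z : List Γ,
    (wappend (x ++ v ++ y) (omegaPow z) ∈ L → wappend (x ++ u ++ y) (omegaPow z) ∈ L) ∧
    (wappend x (omegaPow (v ++ y)) ∈ L → wappend x (omegaPow (u ++ y)) ∈ L)

/-- The syntactic congruence `u ≡_L v`. -/
def synEq (L : Set (Word Γ)) (u v : List Γ) : Prop := synLe L u v ∧ synLe L v u

/-- `[s][e]^ω` for syntactic classes represented by words `s`, `e`. -/
def pairSetSyn (L : Set (Word Γ)) (s e : List Γ) : Set (Word Γ) :=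
  {α | ∃ u v, synEq L u s ∧ (∀ i, synEq L (v i) e) ∧ IsInfProd u v α}

/-- `s` represents an element of `M_e` in the syntactic monoid of `L`:
`s` is a product of words each of which is a factor of (something equivalent to) `e`. -/
def InMe (L : Set (Word Γ)) (e s : List Γ) : Prop :=
  ∃ parts : List (List Γ), s = parts.flatten ∧ ∀ p ∈ parts, ∃ x y, synEq L (x ++ p ++ y) e

/-- Glue a factorization `u₁ a₁ u₂ a₂ ⋯ u_k a_k` into a single finite word. -/
def glue : List (List Γ) → List (Set Γ × Γ) → List Γ
  | x :: xs, p :: l => x ++ p.2 :: glue xs l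
  | _, _ => []

/-- `(us, β)` is a factorization of `α` as `u₁ a₁ ⋯ u_k a_k β` with `uᵢ ∈ Aᵢ*`, `β ∈ B^∞`. -/
def IsFactorization (l : List (Set Γ × Γ)) (B : Set Γ) (us : List (List Γ)) (β : Word Γ)
    (α : Word Γ) : Prop :=
  us.length = l.length ∧
  (∀ (i : ℕ) (h1 : i < us.length) (h2 : i < l.length),
    ∀ c ∈ us.get ⟨i, h1⟩, c ∈ (l.get ⟨i, h2⟩).1) ∧
  β ∈ infin B ∧ α = wappend (glue us l) β

/-- The monomial `A₁* a₁ ⋯ A_k* a_k B^∞`. -/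
def monomial (l : List (Set Γ × Γ)) (B : Set Γ) : Set (Word Γ) :=
  {α | ∃ us β, IsFactorization l B us β α}

/-- The monomial given by `(l, B)` is unambiguous. -/
def Unambiguous (l : List (Set Γ × Γ)) (B : Set Γ) : Prop :=
  ∀ α us β us' β', IsFactorization l B us β α → IsFactorization l B us' β' α →
    us = us' ∧ β = β'

/-- `L` is a polynomial: a finite union of monomials. -/
def IsPolynomial (L : Set (Word Γ)) : Prop :=
  ∃ ms : List (List (Set Γ × Γ) × Set Γ), L = {α | ∃ m ∈ ms, α ∈ monomial m.1 m.2}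

/-- The set of marker letters of a monomial. -/
def sndSet (l : List (Set Γ × Γ)) : Set Γ := {a | ∃ p ∈ l, p.2 = a}

/-- `M_e`: the submonoid generated by the factors of the idempotent `e`. -/
def Msub {M : Type} [Monoid M] (e : M) : Submonoid M :=
  Submonoid.closure {t | ∃ x y, x * t * y = e}

/-- The variety `DA`: `ese = e` for all idempotents `e` and all `s ∈ M_e`. -/
def IsDA (M : Type) [Monoid M] : Prop :=
  ∀ e : M, e * e = e → ∀ s ∈ Msub e, e * s * e = e

end InfWords

/-! Two distinct words differ at some position `n` (a letter versus another letter, or versus the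
end of a finite word), and the words sharing a given value at position `n` form an open set: a
finite word `u` is isolated since `u ∅^∞ = {u}`, and a word with a letter at position `n` lies in
the cone `u Γ^∞` of its prefix `u` of length `n + 1`, all of whose words agree with it there. -/

namespace InfWords

variable {Γ : Type}

def letterAt : Word Γ → ℕ → Option Γ
  | Sum.inl w, n => w[n]?
  | Sum.inr f, n => some (f n)

theorem letterAt_injective : Function.Injective (letterAt : Word Γ → ℕ → Option Γ) := by
  rintro (v | f) (w | g) h
  · exact congrArg Sum.inl (List.ext_getElem? (congrFun h))
  · simpa [letterAt] using congrFun h v.length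
  · simpa [letterAt] using (congrFun h w.length).symm
  · exact congrArg Sum.inr (funext fun n => Option.some_injective _ (congrFun h n))

theorem letterAt_wappend_of_lt (u : List Γ) (β : Word Γ) {n : ℕ} (hn : n < u.length) :
    letterAt (wappend u β) n = u[n]? := by
  cases β <;> simp [wappend, letterAt, hn, List.getElem?_append_left]

theorem wappend_ofFn_shift (f : ℕ → Γ) (k : ℕ) :
    wappend (List.ofFn fun i : Fin k => f i) (Sum.inr fun m => f (m + k)) = Sum.inr f := by
  simp only [wappend, Sum.inr.injEq]
  funext m
  split_ifs with hm
  · simp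
  · simp only [List.length_ofFn] at hm ⊢
    rw [Nat.sub_add_cancel (not_lt.mp hm)]

theorem exists_wappend_eq {α : Word Γ} {n : ℕ} (hα : (letterAt α n).isSome) :
    ∃ u β, u.length = n + 1 ∧ wappend u β = α := by
  rcases α with w | f
  · have hn : n < w.length := by simpa [letterAt] using hα
    exact ⟨w.take (n + 1), Sum.inl (w.drop (n + 1)), by simp; omega,
      by simp [wappend]⟩
  · exact ⟨_, _, List.length_ofFn, wappend_ofFn_shift f (n + 1)⟩

theorem isOpen_cone (u : List Γ) (A : Set Γ) : IsOpen (cone u A) :=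
  TopologicalSpace.GenerateOpen.basic _ ⟨u, A, rfl⟩

theorem cone_empty (u : List Γ) : cone u ∅ = {Sum.inl u} := by
  ext α
  constructor
  · rintro ⟨(_ | ⟨a, _⟩) | f, hβ, rfl⟩
    · simp [wappend]
    · exact absurd (hβ (List.mem_cons_self (a := a))) id
    · exact absurd (hβ ⟨0, rfl⟩) id
  · rintro rfl
    exact ⟨Sum.inl [], fun a ha => by simp [alph] at ha, by simp [wappend]⟩

theorem isOpen_singleton_inl (u : List Γ) : IsOpen {(Sum.inl u : Word Γ)} :=
  cone_empty u ▸ isOpen_cone u ∅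

theorem isOpen_setOf_letterAt_eq (n : ℕ) (o : Option Γ) :
    IsOpen {α : Word Γ | letterAt α n = o} := by
  refine isOpen_iff_forall_mem_open.mpr fun α hα => ?_
  rcases o with _ | a
  · rcases α with w | f
    · exact ⟨_, Set.singleton_subset_iff.mpr hα, isOpen_singleton_inl w, rfl⟩
    · simp [letterAt] at hα
  · obtain ⟨u, β, hu, rfl⟩ := exists_wappend_eq (α := α) (n := n) (hα ▸ rfl)
    have hn : n < u.length := by omega
    refine ⟨cone u Set.univ, ?_, isOpen_cone u Set.univ, β, Set.subset_univ _, rfl⟩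
    rintro _ ⟨γ, -, rfl⟩
    rw [Set.mem_ofPred_eq, letterAt_wappend_of_lt u γ hn, ← hα, letterAt_wappend_of_lt u β hn]

end InfWords

open InfWords in
theorem gamma_infty_t2_general (Γ : Type) :
    T2Space (InfWords.Word Γ) := by
  refine ⟨fun α β hne => ?_⟩
  obtain ⟨n, hn⟩ := Function.ne_iff.mp (letterAt_injective.ne hne)
  exact ⟨_, _, isOpen_setOf_letterAt_eq n (letterAt α n), isOpen_setOf_letterAt_eq n (letterAt β n),
    rfl, rfl, Set.disjoint_left.mpr fun γ hα hβ => hn (hα.symm.trans hβ)⟩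

theorem gamma_infty_t2 (Γ : Type) [Fintype Γ] :
    T2Space (InfWords.Word Γ) :=
  gamma_infty_t2_general Γ
end

section
/- Let P = A₁*a₁ ⋯ A_k*a_k A_{k+1}^∞ be a monomial and L = P ∩ B^im for some B ⊆ A_{k+1}. Then the closure of L in the alphabetic topology equals the union, over all indices i (1 ≤ i ≤ k+1) and all alphabets A with {a_i,…,a_k} ∪ B ⊆ A ⊆ A_i, of the sets A₁*a₁ ⋯ A_{i-1}*a_{i-1} A_i^∞ ∩ A^im. -/
/-!
Finite words are isolated points, so only infinite limits `f` matter. Their tails eventually use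
only letters of `im f`, so the basic neighbourhoods `f[0,n) (im f)^∞` shrink with `n`, and each
of them meets `L`. Follow the position of the first marker `a₁` in these approximants: if it
frequently sits at one position `k`, then `f = f[0,k) a₁ f'` with `f[0,k) ∈ A₁*`, and `f'` is a
limit of the same kind for the shorter monomial; otherwise it escapes to infinity, so
`f ∈ A₁^∞` and every marker lies in the tails, hence in `im f`. Conversely, a word
`u₁a₁⋯u_{i-1}a_{i-1}β` of the right-hand side is approximated inside `u D^∞` by
`u₁a₁⋯u_{i-1}a_{i-1}`, a long enough prefix of `β`, the markers `a_i⋯a_k` and a word with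
alphabet and imaginary part `B`; the markers and `B` lie in `im α ⊆ D`.
-/

namespace InfWords

open Filter

variable {Γ : Type}

section Words

lemma wappend_inl (u v : List Γ) : wappend u (Sum.inl v) = Sum.inl (u ++ v) := rfl

@[simp] lemma wappend_nil (x : Word Γ) : wappend [] x = x := by
  cases x <;> rfl

lemma wappend_append (u v : List Γ) (x : Word Γ) :
    wappend (u ++ v) x = wappend u (wappend v x) := by
  cases x with
  | inl w => simp [wappend_inl]
  | inr f =>
    refine congrArg Sum.inr (funext fun n => ?_)
    simp only [List.length_append, List.get_eq_getElem]
    split_ifs <;> first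
      | (exfalso; omega)
      | simp [List.getElem_append_left, Nat.sub_sub, *]
      | rw [List.getElem_append_right (by omega)]

lemma wappend_cons (a : Γ) (u : List Γ) (x : Word Γ) :
    wappend (a :: u) x = wappend [a] (wappend u x) :=
  wappend_append [a] u x

lemma wappend_singleton_inj {a b : Γ} {x y : Word Γ} (h : wappend [a] x = wappend [b] y) :
    a = b ∧ x = y := by
  cases x <;> cases y <;> simp only [wappend, Sum.inl.injEq, Sum.inr.injEq, reduceCtorEq,
    List.singleton_append, List.cons.injEq] at h ⊢
  · exact h
  · exact ⟨by simpa using congrFun h 0, funext fun n => by simpa using congrFun h (n + 1)⟩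

lemma exists_eq_append_of_wappend_eq {u v : List Γ} {x y : Word Γ}
    (h : wappend u x = wappend v y) (hle : u.length ≤ v.length) :
    ∃ w, v = u ++ w ∧ x = wappend w y := by
  induction u generalizing v with
  | nil => exact ⟨v, rfl, by simpa using h⟩
  | cons a u ih =>
    obtain _ | ⟨b, v⟩ := v
    · simp at hle
    rw [wappend_cons, wappend_cons b] at h
    obtain ⟨rfl, h'⟩ := wappend_singleton_inj h
    obtain ⟨w, rfl, rfl⟩ := ih h' (by simpa using hle)
    exact ⟨w, rfl, rfl⟩

lemma inr_eq_wappend (f : ℕ → Γ) (n : ℕ) :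
    (Sum.inr f : Word Γ) = wappend ((List.range n).map f) (Sum.inr fun m => f (n + m)) := by
  refine congrArg Sum.inr (funext fun m => ?_)
  simp only [List.length_map, List.length_range, List.get_eq_getElem, List.getElem_map,
    List.getElem_range]
  split_ifs
  · rfl
  · congr 1; omega

lemma alph_wappend (u : List Γ) (x : Word Γ) :
    alph (wappend u x) = {a | a ∈ u} ∪ alph x := by
  cases x with
  | inl v => ext; simp [alph, wappend_inl]
  | inr f =>
    ext c
    simp only [alph, wappend, List.get_eq_getElem, Set.mem_ofPred_eq, Set.mem_union,
      List.mem_iff_getElem]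
    constructor
    · rintro ⟨n, hn⟩
      split_ifs at hn with h
      · exact Or.inl ⟨n, h, hn⟩
      · exact Or.inr ⟨_, hn⟩
    · rintro (⟨n, h, rfl⟩ | ⟨n, rfl⟩)
      · exact ⟨n, dif_pos h⟩
      · exact ⟨u.length + n, by simp⟩

lemma mem_im_inr {f : ℕ → Γ} {a : Γ} : a ∈ im (Sum.inr f : Word Γ) ↔ ∃ᶠ n in atTop, f n = a :=
  frequently_atTop.symm

lemma im_wappend (u : List Γ) (x : Word Γ) : im (wappend u x) = im x := by
  cases x with
  | inl v => rfl
  | inr f =>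
    ext c
    rw [wappend, mem_im_inr, mem_im_inr]
    conv_lhs => rw [← map_add_atTop_eq_nat u.length, frequently_map]
    simp

lemma im_subset_alph (x : Word Γ) : im x ⊆ alph x := by
  cases x with
  | inl v => simp [im]
  | inr f => exact fun a ha => (mem_im_inr.1 ha).exists

end Words

section Cones

variable {u w : List Γ} {A B : Set Γ} {x y : Word Γ}

lemma wappend_mem_cone (hy : alph y ⊆ A) : wappend u y ∈ cone u A := ⟨y, hy, rfl⟩

lemma cone_mono (h : A ⊆ B) : cone u A ⊆ cone u B :=
  Set.image_mono fun _ hy => Set.Subset.trans hy h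

lemma wappend_mem_infin : wappend u y ∈ infin A ↔ (∀ c ∈ u, c ∈ A) ∧ y ∈ infin A := by
  show alph _ ⊆ A ↔ _
  rw [alph_wappend, Set.union_subset_iff]
  rfl

lemma cone_append_subset (hw : ∀ c ∈ w, c ∈ A) : cone (u ++ w) A ⊆ cone u A := by
  rintro _ ⟨y, hy, rfl⟩
  exact ⟨wappend w y, wappend_mem_infin.2 ⟨hw, hy⟩, (wappend_append u w y).symm⟩

lemma im_subset_of_mem_cone (hx : x ∈ cone u A) : im x ⊆ A := by
  obtain ⟨y, hy, rfl⟩ := hx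
  rw [im_wappend]
  exact (im_subset_alph y).trans hy

lemma exists_eq_append_of_wappend_mem_cone_of_length_le (h : wappend w y ∈ cone u A)
    (hle : w.length ≤ u.length) : ∃ t, u = w ++ t ∧ y ∈ cone t A := by
  obtain ⟨δ, hδ, hx⟩ := h
  obtain ⟨t, rfl, rfl⟩ := exists_eq_append_of_wappend_eq hx.symm hle
  exact ⟨t, rfl, δ, hδ, rfl⟩

lemma exists_eq_append_of_wappend_mem_cone_of_le_length (h : wappend w y ∈ cone u A)
    (hle : u.length ≤ w.length) : ∃ s, w = u ++ s ∧ (∀ c ∈ s, c ∈ A) ∧ alph y ⊆ A := by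
  obtain ⟨δ, hδ, hx⟩ := h
  obtain ⟨s, rfl, rfl⟩ := exists_eq_append_of_wappend_eq hx hle
  exact ⟨s, rfl, wappend_mem_infin.1 hδ⟩

lemma isTopologicalBasis_cone :
    TopologicalSpace.IsTopologicalBasis {S : Set (Word Γ) | ∃ u A, S = cone u A} := by
  refine ⟨?_, Set.eq_univ_of_forall fun x => ⟨cone [] Set.univ, ⟨[], _, rfl⟩, x,
    Set.subset_univ _, wappend_nil x⟩, rfl⟩
  rintro _ ⟨u, A, rfl⟩ _ ⟨v, B, rfl⟩ x ⟨hu, hv⟩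
  wlog hle : u.length ≤ v.length generalizing u v A B
  · obtain ⟨S, hS, hx, hsub⟩ := this v B u A hv hu (le_of_not_ge hle)
    exact ⟨S, hS, hx, hsub.trans (Set.inter_comm _ _).subset⟩
  obtain ⟨y, hy, rfl⟩ := hv
  obtain ⟨s, rfl, hs, hyA⟩ := exists_eq_append_of_wappend_mem_cone_of_le_length hu hle
  refine ⟨cone (u ++ s) (A ∩ B), ⟨_, _, rfl⟩, ⟨y, Set.subset_inter hyA hy, rfl⟩,
    fun z hz => ⟨?_, ?_⟩⟩
  · exact cone_append_subset hs (cone_mono Set.inter_subset_left hz)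
  · exact cone_mono Set.inter_subset_right hz

lemma mem_of_inl_mem_closure {L : Set (Word Γ)} (h : Sum.inl w ∈ closure L) :
    Sum.inl w ∈ L := by
  obtain ⟨_, ⟨δ, hδ, rfl⟩, hx⟩ := isTopologicalBasis_cone.mem_closure_iff.1 h _ ⟨w, ∅, rfl⟩
    ⟨Sum.inl [], by simp [infin, alph], by simp [wappend_inl]⟩
  cases δ with
  | inl v =>
    rw [List.eq_nil_iff_forall_not_mem.2 fun c hc => hδ hc] at hx
    simpa [wappend_inl] using hx
  | inr g => exact (hδ ⟨0, rfl⟩).elim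

end Cones

section Prefixes

variable {f : ℕ → Γ} {A : Set Γ}

lemma eventually_mem_im [Finite Γ] (f : ℕ → Γ) :
    ∀ᶠ n in atTop, f n ∈ im (Sum.inr f : Word Γ) := by
  have h : ∀ c : Γ, ∀ᶠ n in atTop, c ∈ im (Sum.inr f : Word Γ) ∨ f n ≠ c := fun c => by
    by_cases hc : c ∈ im (Sum.inr f : Word Γ)
    · exact .of_forall fun _ => .inl hc
    · exact (not_frequently.1 (mt mem_im_inr.2 hc)).mono fun _ => .inr
  filter_upwards [eventually_all.2 h] with n hn
  exact (hn (f n)).resolve_right (not_not.2 rfl)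

lemma eventually_inr_mem_cone (hA : ∀ᶠ n in atTop, f n ∈ A) :
    ∀ᶠ n in atTop, Sum.inr f ∈ cone ((List.range n).map f) A := by
  obtain ⟨N, hN⟩ := eventually_atTop.1 hA
  filter_upwards [eventually_ge_atTop N] with n hn
  rw [inr_eq_wappend f n]
  exact wappend_mem_cone (by rintro _ ⟨m, rfl⟩; exact hN _ (by omega))

lemma eventually_cone_range_subset (hA : ∀ᶠ n in atTop, f n ∈ A) :
    ∀ᶠ P in atTop, ∀ Q ≥ P, cone ((List.range Q).map f) A ⊆ cone ((List.range P).map f) A := by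
  obtain ⟨N, hN⟩ := eventually_atTop.1 hA
  filter_upwards [eventually_ge_atTop N] with P hP Q hQ
  obtain ⟨k, rfl⟩ := Nat.exists_eq_add_of_le hQ
  rw [List.range_add, List.map_append]
  refine cone_append_subset ?_
  simp only [List.map_map, List.mem_map, List.mem_range]
  rintro _ ⟨i, -, rfl⟩
  exact hN _ (by simp; omega)

lemma inr_mem_infin_of_frequently (h : ∃ᶠ n in atTop, ∀ c ∈ (List.range n).map f, c ∈ A) :
    (Sum.inr f : Word Γ) ∈ infin A := by
  rintro _ ⟨m, rfl⟩
  obtain ⟨n, hn, hA⟩ := frequently_atTop.1 h (m + 1)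
  exact hA _ (List.mem_map.2 ⟨m, List.mem_range.2 (by omega), rfl⟩)

lemma wappend_mem_cone_range {P : ℕ} {w : List Γ} {y : Word Γ}
    (h : wappend w y ∈ cone ((List.range P).map f) A) (hle : w.length ≤ P) :
    w = (List.range w.length).map f ∧
      y ∈ cone ((List.range (P - w.length)).map fun i => f (w.length + i)) A := by
  obtain ⟨t, ht, hy⟩ :=
    exists_eq_append_of_wappend_mem_cone_of_length_le h (by simpa using hle)
  rw [← Nat.add_sub_cancel' hle, List.range_add, List.map_append, List.map_map] at ht
  obtain ⟨hw, rfl⟩ := List.append_inj ht.symm (by simp)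
  exact ⟨hw, hy⟩

end Prefixes

section Monomials

variable {p : Set Γ × Γ} {l : List (Set Γ × Γ)} {C : Set Γ} {x : Word Γ}

lemma monomial_nil (C : Set Γ) : monomial [] C = infin C := by
  ext x
  constructor
  · rintro ⟨us, β, hlen, -, hβ, rfl⟩
    rw [List.length_eq_zero_iff.1 hlen]
    simpa [glue] using hβ
  · exact fun hx => ⟨[], x, rfl, nofun, hx, by simp [glue]⟩

lemma mem_monomial_cons :
    x ∈ monomial (p :: l) C ↔
      ∃ u, (∀ c ∈ u, c ∈ p.1) ∧ ∃ y ∈ monomial l C, x = wappend (u ++ [p.2]) y := by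
  constructor
  · rintro ⟨_ | ⟨u, us⟩, β, hlen, hus, hβ, rfl⟩
    · simp at hlen
    refine ⟨u, hus 0 (by simp) (by simp), _,
      ⟨us, β, by simpa using hlen, fun i h₁ h₂ => hus (i + 1) (by simpa using h₁)
        (by simpa using h₂), hβ, rfl⟩, ?_⟩
    rw [glue, ← wappend_append]
    simp
  · rintro ⟨u, hu, _, ⟨us, β, hlen, hus, hβ, rfl⟩, rfl⟩
    refine ⟨u :: us, β, by simpa using hlen, ?_, hβ, ?_⟩
    · rintro (_ | i) h₁ h₂
      exacts [hu, hus i _ _]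
    · rw [glue, ← wappend_append]
      simp

lemma sndSet_nil : sndSet ([] : List (Set Γ × Γ)) = ∅ := by
  simp [sndSet]

lemma sndSet_cons : sndSet (p :: l) = insert p.2 (sndSet l) := by
  ext
  simp [sndSet, eq_comm]

lemma mem_sndSet {a : Γ} : a ∈ sndSet l ↔ a ∈ l.map Prod.snd := by
  simp [sndSet]

lemma im_subset_of_mem_monomial (hx : x ∈ monomial l C) : im x ⊆ C := by
  induction l generalizing x with
  | nil =>
    rw [monomial_nil] at hx
    exact (im_subset_alph x).trans hx
  | cons p l ih =>
    obtain ⟨u, -, y, hy, rfl⟩ := mem_monomial_cons.1 hx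
    rw [im_wappend]
    exact ih hy

lemma sndSet_subset_alph_of_mem_monomial (hx : x ∈ monomial l C) : sndSet l ⊆ alph x := by
  induction l generalizing x with
  | nil => simp [sndSet_nil]
  | cons p l ih =>
    obtain ⟨u, -, y, hy, rfl⟩ := mem_monomial_cons.1 hx
    rw [sndSet_cons, alph_wappend]
    exact Set.insert_subset (Or.inl (by simp)) ((ih hy).trans Set.subset_union_right)

lemma wappend_map_snd_mem_monomial {γ : Word Γ} (hγ : γ ∈ infin C) :
    wappend (l.map Prod.snd) γ ∈ monomial l C := by
  induction l with
  | nil => simpa [monomial_nil] using hγ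
  | cons p l ih => exact mem_monomial_cons.2 ⟨[], nofun, _, ih, by simp [← wappend_append]⟩

end Monomials

/-- The alphabet `A_{j+1}` of the starred factor following the first `j` markers of the
monomial `(l, C)`; past the last marker it is the alphabet `C` of the tail. -/
def starAlph (l : List (Set Γ × Γ)) (C : Set Γ) (j : ℕ) : Set Γ :=
  if h : j < l.length then (l.get ⟨j, h⟩).1 else C

@[simp] lemma starAlph_nil (C : Set Γ) (j : ℕ) : starAlph [] C j = C := rfl

@[simp] lemma starAlph_cons_zero (p : Set Γ × Γ) (l : List (Set Γ × Γ)) (C : Set Γ) :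
    starAlph (p :: l) C 0 = p.1 := rfl

@[simp] lemma starAlph_cons_succ (p : Set Γ × Γ) (l : List (Set Γ × Γ)) (C : Set Γ) (j : ℕ) :
    starAlph (p :: l) C (j + 1) = starAlph l C j := by
  simp [starAlph]

lemma starAlph_length (l : List (Set Γ × Γ)) (C : Set Γ) : starAlph l C l.length = C := by
  simp [starAlph]

section Limits

variable {p : Set Γ × Γ} {l : List (Set Γ × Γ)} {A C : Set Γ} {f : ℕ → Γ}

lemma eventually_nonempty_of_frequently {L : Set (Word Γ)} (hA : ∀ᶠ n in atTop, f n ∈ A)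
    (h : ∃ᶠ n in atTop, (cone ((List.range n).map f) A ∩ L).Nonempty) :
    ∀ᶠ n in atTop, (cone ((List.range n).map f) A ∩ L).Nonempty := by
  filter_upwards [eventually_cone_range_subset hA] with P hP
  obtain ⟨Q, hPQ, x, hx, hxL⟩ := frequently_atTop.1 h P
  exact ⟨x, hP Q hPQ hx, hxL⟩

def FirstMarkerAt (p : Set Γ × Γ) (l : List (Set Γ × Γ)) (C A : Set Γ) (f : ℕ → Γ)
    (P k : ℕ) : Prop :=
  ∃ u, u.length = k ∧ (∀ c ∈ u, c ∈ p.1) ∧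
    ∃ y ∈ monomial l C, wappend (u ++ [p.2]) y ∈ cone ((List.range P).map f) A

lemma frequently_drop_of_frequently_firstMarkerAt {k : ℕ}
    (hk : ∃ᶠ P in atTop, FirstMarkerAt p l C A f P k) :
    (∀ c ∈ (List.range k).map f, c ∈ p.1) ∧ f k = p.2 ∧
      ∃ᶠ m in atTop,
        (cone ((List.range m).map fun i => f (k + 1 + i)) A ∩ monomial l C).Nonempty := by
  have key : ∀ P, k < P → FirstMarkerAt p l C A f P k →
      (∀ c ∈ (List.range k).map f, c ∈ p.1) ∧ f k = p.2 ∧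
        (cone ((List.range (P - (k + 1))).map fun i => f (k + 1 + i)) A ∩
          monomial l C).Nonempty := by
    rintro P hP ⟨u, rfl, hu, y, hy, hx⟩
    obtain ⟨hw, hyc⟩ := wappend_mem_cone_range hx (by simpa using hP)
    rw [List.length_append, List.length_singleton] at hw hyc
    rw [List.range_succ, List.map_append] at hw
    obtain ⟨hu', hfk⟩ := List.append_inj' hw rfl
    exact ⟨hu' ▸ hu, by simpa using hfk.symm, y, hyc, hy⟩
  have hk' := hk.and_eventually (eventually_gt_atTop k)
  obtain ⟨P, hP, hPk⟩ := hk'.exists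
  exact ⟨(key P hPk hP).1, (key P hPk hP).2.1,
    (tendsto_sub_atTop_nat (k + 1)).frequently (hk'.mono fun P h => (key P h.2 h.1).2.2)⟩

lemma sndSet_subset_and_mem_infin_of_late_firstMarker (hA : ∀ᶠ n in atTop, f n ∈ A)
    (h : ∀ Q, ∀ᶠ P in atTop, ∃ k ≥ Q, FirstMarkerAt p l C A f P k) :
    sndSet (p :: l) ⊆ A ∧ (Sum.inr f : Word Γ) ∈ infin p.1 := by
  have hQ : ∀ᶠ Q in atTop, sndSet (p :: l) ⊆ A ∧ ∀ c ∈ (List.range Q).map f, c ∈ p.1 := by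
    filter_upwards [eventually_cone_range_subset hA] with Q hsub
    obtain ⟨P, ⟨_, hQu, u, rfl, hu, y, hy, hx⟩, hQP⟩ :=
      ((h Q).and (eventually_ge_atTop Q)).exists
    obtain ⟨s, hs, hsA, hyA⟩ := exists_eq_append_of_wappend_mem_cone_of_le_length
      (hsub P hQP hx) (by simpa using hQu.trans (Nat.le_succ _))
    have hs' : s = u.drop Q ++ [p.2] := by
      have h := congrArg (List.drop Q) hs
      rwa [List.drop_append_of_le_length hQu, List.drop_left' (by simp), eq_comm] at h
    refine ⟨?_, fun c hc => hu c ?_⟩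
    · rw [sndSet_cons]
      exact Set.insert_subset (hsA _ (by simp [hs']))
        ((sndSet_subset_alph_of_mem_monomial hy).trans hyA)
    · exact (List.prefix_of_prefix_length_le ⟨s, hs.symm⟩ (List.prefix_append u [p.2])
        (by simpa using hQu)).subset hc
  obtain ⟨_, hsnd, -⟩ := hQ.exists
  exact ⟨hsnd, inr_mem_infin_of_frequently (hQ.frequently.mono fun _ h => h.2)⟩

theorem exists_mem_monomial_take_of_frequently :
    ∀ (l : List (Set Γ × Γ)) (f : ℕ → Γ), (∀ᶠ n in atTop, f n ∈ A) →
      (∃ᶠ n in atTop, (cone ((List.range n).map f) A ∩ monomial l C).Nonempty) →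
      ∃ j ≤ l.length, sndSet (l.drop j) ⊆ A ∧
        (Sum.inr f : Word Γ) ∈ monomial (l.take j) (starAlph l C j)
  | [], f, _, h => by
    refine ⟨0, le_rfl, by simp [sndSet_nil], ?_⟩
    rw [List.take_zero, monomial_nil, starAlph_nil]
    refine inr_mem_infin_of_frequently (h.mono ?_)
    rintro n ⟨_, ⟨δ, -, rfl⟩, hx⟩ c hc
    rw [monomial_nil] at hx
    exact (wappend_mem_infin.1 hx).1 c hc
  | p :: l, f, hA, h => by
    by_cases hfix : ∃ k, ∃ᶠ P in atTop, FirstMarkerAt p l C A f P k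
    · obtain ⟨k, hk⟩ := hfix
      obtain ⟨hu, hfk, hdrop⟩ := frequently_drop_of_frequently_firstMarkerAt hk
      have hA' : ∀ᶠ i in atTop, f (k + 1 + i) ∈ A := by
        simpa [add_comm] using (tendsto_add_atTop_nat (k + 1)).eventually hA
      obtain ⟨j, hj, hsnd, hmem⟩ := exists_mem_monomial_take_of_frequently l _ hA' hdrop
      refine ⟨j + 1, by simpa using hj, by simpa using hsnd, ?_⟩
      rw [List.take_succ_cons, starAlph_cons_succ, inr_eq_wappend f (k + 1)]
      refine mem_monomial_cons.2 ⟨_, hu, _, hmem, ?_⟩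
      rw [List.range_succ, List.map_append, List.map_singleton, hfk]
    · have hlate : ∀ Q, ∀ᶠ P in atTop, ∃ k ≥ Q, FirstMarkerAt p l C A f P k := by
        intro Q
        filter_upwards [eventually_nonempty_of_frequently hA h,
          (Finset.range Q).eventually_all.2 fun k _ => not_frequently.1 fun hk => hfix ⟨k, hk⟩]
          with P ⟨x, hx, hxm⟩ hP
        obtain ⟨u, hu, y, hy, rfl⟩ := mem_monomial_cons.1 hxm
        have hmark : FirstMarkerAt p l C A f P u.length := ⟨u, rfl, hu, y, hy, hx⟩
        exact ⟨u.length, not_lt.1 fun hlt => hP _ (Finset.mem_range.2 hlt) hmark, hmark⟩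
      obtain ⟨hsnd, hmem⟩ := sndSet_subset_and_mem_infin_of_late_firstMarker hA hlate
      exact ⟨0, Nat.zero_le _, hsnd, by simpa [monomial_nil] using hmem⟩

end Limits

section Approximation

lemma exists_cone_of_wappend_mem_cone {u w : List Γ} {D : Set Γ} {y : Word Γ}
    (h : wappend w y ∈ cone u D) :
    ∃ t, y ∈ cone t D ∧ ∀ z ∈ cone t D, wappend w z ∈ cone u D := by
  rcases le_total w.length u.length with hle | hle
  · obtain ⟨t, rfl, hy⟩ := exists_eq_append_of_wappend_mem_cone_of_length_le h hle
    refine ⟨t, hy, ?_⟩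
    rintro _ ⟨z, hz, rfl⟩
    exact ⟨z, hz, wappend_append w t z⟩
  · obtain ⟨s, rfl, hs, hy⟩ := exists_eq_append_of_wappend_mem_cone_of_le_length h hle
    refine ⟨[], ⟨y, hy, wappend_nil y⟩, ?_⟩
    rintro _ ⟨z, hz, rfl⟩
    rw [wappend_nil, wappend_append]
    exact wappend_mem_cone (wappend_mem_infin.2 ⟨hs, hz⟩)

lemma exists_wappend_mem_monomial_inter_cone {C D : Set Γ} {γ : Word Γ}
    (hγ : γ ∈ infin (C ∩ D)) :
    ∀ (l : List (Set Γ × Γ)) (j : ℕ) (α : Word Γ) (u : List Γ),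
      α ∈ monomial (l.take j) (starAlph l C j) → α ∈ cone u D → sndSet (l.drop j) ⊆ D →
      ∃ w, wappend w γ ∈ monomial l C ∩ cone u D
  | [], j, α, u, hα, ⟨δ, _, hδα⟩, _ => by
    rw [List.take_nil, starAlph_nil, monomial_nil, ← hδα] at hα
    refine ⟨u, ?_, wappend_mem_cone fun c hc => (hγ hc).2⟩
    rw [monomial_nil]
    exact wappend_mem_infin.2 ⟨(wappend_mem_infin.1 hα).1, fun c hc => (hγ hc).1⟩
  | p :: l, 0, α, u, hα, ⟨δ, _, hδα⟩, hsnd => by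
    rw [List.take_zero, starAlph_cons_zero, monomial_nil, ← hδα] at hα
    refine ⟨u ++ (p :: l).map Prod.snd, mem_monomial_cons.2 ⟨u, (wappend_mem_infin.1 hα).1, _,
      wappend_map_snd_mem_monomial fun c hc => (hγ hc).1,
      by rw [wappend_append, wappend_append, List.map_cons, wappend_cons]⟩, ?_⟩
    rw [wappend_append]
    exact wappend_mem_cone (wappend_mem_infin.2
      ⟨fun c hc => hsnd (mem_sndSet.2 hc), fun c hc => (hγ hc).2⟩)
  | p :: l, j + 1, α, u, hα, hu, hsnd => by
    rw [List.take_succ_cons, starAlph_cons_succ, mem_monomial_cons] at hα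
    obtain ⟨v, hv, α', hα', rfl⟩ := hα
    obtain ⟨t, ht, hsub⟩ := exists_cone_of_wappend_mem_cone hu
    obtain ⟨w, hw, hwt⟩ := exists_wappend_mem_monomial_inter_cone hγ l j α' t hα' ht hsnd
    refine ⟨v ++ [p.2] ++ w, ?_, ?_⟩ <;> rw [wappend_append]
    · exact mem_monomial_cons.2 ⟨v, hv, _, hw, rfl⟩
    · exact hsub _ hwt

lemma alph_omegaPow_subset (z : List Γ) : alph (omegaPow z) ⊆ {a | a ∈ z} := by
  cases z with
  | nil => simp [omegaPow, alph]
  | cons b t =>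
    rintro _ ⟨n, rfl⟩
    exact List.get_mem _ _

lemma subset_im_omegaPow (z : List Γ) : {a | a ∈ z} ⊆ im (omegaPow z) := by
  cases z with
  | nil => simp
  | cons b t =>
    intro a ha
    obtain ⟨i, hi, rfl⟩ := List.mem_iff_getElem.1 ha
    intro N
    refine ⟨i + N * (b :: t).length, by nlinarith [(b :: t).length_pos_of_mem ha], ?_⟩
    simp [Nat.add_mul_mod_self_right, Nat.mod_eq_of_lt (show i < t.length + 1 from hi)]

lemma exists_alph_eq_im_eq [Finite Γ] (B : Set Γ) : ∃ γ : Word Γ, alph γ = B ∧ im γ = B := by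
  obtain ⟨z, hz⟩ : ∃ z : List Γ, {a | a ∈ z} = B :=
    ⟨B.toFinite.toFinset.toList, by ext; simp⟩
  have h₁ := alph_omegaPow_subset z
  have h₂ := subset_im_omegaPow z
  have h₃ := im_subset_alph (omegaPow z)
  exact ⟨omegaPow z, hz ▸ h₁.antisymm (h₂.trans h₃), hz ▸ (h₃.trans h₁).antisymm h₂⟩

end Approximation

section Closure

variable [Finite Γ] {l : List (Set Γ × Γ)} {B' B : Set Γ} {α : Word Γ}

lemma mem_closure_of_mem_monomial_take (hB : B ⊆ B') {j : ℕ}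
    (hα : α ∈ monomial (l.take j) (starAlph l B' j)) (hsub : sndSet (l.drop j) ∪ B ⊆ im α) :
    α ∈ closure (monomial l B' ∩ imSet B) := by
  obtain ⟨γ, hγalph, hγim⟩ := exists_alph_eq_im_eq B
  rw [isTopologicalBasis_cone.mem_closure_iff]
  rintro _ ⟨u, D, rfl⟩ hu
  have hD := hsub.trans (im_subset_of_mem_cone hu)
  have hγ : γ ∈ infin (B' ∩ D) := by
    show alph γ ⊆ _
    rw [hγalph]
    exact Set.subset_inter hB (Set.subset_union_right.trans hD)
  obtain ⟨w, hw, hwu⟩ := exists_wappend_mem_monomial_inter_cone hγ l j α u hα hu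
    (Set.subset_union_left.trans hD)
  exact ⟨_, hwu, hw, (im_wappend w γ).trans hγim⟩

lemma exists_mem_monomial_take_of_mem_closure (h : α ∈ closure (monomial l B' ∩ imSet B)) :
    ∃ j ≤ l.length, sndSet (l.drop j) ∪ B ⊆ im α ∧ α ∈ monomial (l.take j) (starAlph l B' j) := by
  cases α with
  | inl w =>
    obtain ⟨hw, hwB⟩ := mem_of_inl_mem_closure h
    refine ⟨l.length, le_rfl, ?_, by rwa [List.take_length, starAlph_length]⟩
    rw [List.drop_length, sndSet_nil, Set.empty_union]
    exact hwB.symm.subset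
  | inr f =>
    have hA := eventually_mem_im f
    have hL : ∀ᶠ n in atTop,
        (cone ((List.range n).map f) (im (Sum.inr f)) ∩ (monomial l B' ∩ imSet B)).Nonempty :=
      (eventually_inr_mem_cone hA).mono fun n hn =>
        isTopologicalBasis_cone.mem_closure_iff.1 h _ ⟨_, _, rfl⟩ hn
    obtain ⟨_, x, hx, -, hxB⟩ := hL.exists
    obtain ⟨j, hj, hsnd, hmem⟩ := exists_mem_monomial_take_of_frequently l f hA
      (hL.frequently.mono fun _ ⟨x, hx, hxm, _⟩ => ⟨x, hx, hxm⟩)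
    exact ⟨j, hj, Set.union_subset hsnd (hxB.symm.subset.trans (im_subset_of_mem_cone hx)), hmem⟩

end Closure

end InfWords

open InfWords in
theorem closure_monomial_inter_imSet (Γ : Type) [Fintype Γ]
    (l : List (Set Γ × Γ)) (B' B : Set Γ) (hB : B ⊆ B') :
    closure (InfWords.monomial l B' ∩ InfWords.imSet B) =
      ⋃ (j : ℕ) (_ : j ≤ l.length) (A : Set Γ)
        (_ : InfWords.sndSet (l.drop j) ∪ B ⊆ A ∧
          A ⊆ (if h : j < l.length then (l.get ⟨j, h⟩).1 else B')),
        (InfWords.monomial (l.take j) (if h : j < l.length then (l.get ⟨j, h⟩).1 else B') ∩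
          InfWords.imSet A) := by
  ext α
  simp only [Set.mem_iUnion, exists_prop]
  constructor
  · intro h
    obtain ⟨j, hj, hsub, hα⟩ := exists_mem_monomial_take_of_mem_closure h
    exact ⟨j, hj, im α, ⟨hsub, im_subset_of_mem_monomial hα⟩, hα, rfl⟩
  · rintro ⟨j, -, A, ⟨hsub, -⟩, hα, rfl : im α = A⟩
    exact mem_closure_of_mem_monomial_take hB hα hsub
end
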